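/- If {x ∈ C : A x ∈ −K} = {0} (the primal recession cone is trivial), then A(C) ∩ (−K) = {0} and there exists y ∈ relint K* with A* y ∈ relint C* (the dual recession cone is strictly feasible). -/

import Mathlib

open RealInnerProductSpace Set Pointwise

variable {E E' : Type*}
  [NormedAddCommGroup E] [InnerProductSpace ℝ E] [FiniteDimensional ℝ E]
  [NormedAddCommGroup E'] [InnerProductSpace ℝ E'] [FiniteDimensional ℝ E']

/-- A nonempty closed convex cone containing `0`. -/
structure IsClosedConvexCone {F : Type*} [NormedAddCommGroup F] [InnerProductSpace ℝ F]
    (K : Set F) : Prop where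
  closed : IsClosed K
  convex : Convex ℝ K
  smul_mem : ∀ ⦃x⦄, x ∈ K → ∀ ⦃t : ℝ⦄, 0 ≤ t → t • x ∈ K
  zero_mem : (0 : F) ∈ K

/-- The dual cone `S* = {y : ⟨x,y⟩ ≥ 0 ∀ x ∈ S}`. -/
def dualCone {F : Type*} [NormedAddCommGroup F] [InnerProductSpace ℝ F] (S : Set F) : Set F :=
  {y | ∀ x ∈ S, 0 ≤ ⟪x, y⟫}

/-- The polar cone `S° = {y : ⟨x,y⟩ ≤ 0 ∀ x ∈ S}`. -/
def polarCone {F : Type*} [NormedAddCommGroup F] [InnerProductSpace ℝ F] (S : Set F) : Set F :=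
  {y | ∀ x ∈ S, ⟪x, y⟫ ≤ 0}

/-- Primal feasible set `X(b) = {x ∈ C : b - A x ∈ K}`. -/
def Xfeas (A : E →ₗ[ℝ] E') (K : Set E') (C : Set E) (b : E') : Set E :=
  {x | x ∈ C ∧ b - A x ∈ K}

/-- Dual feasible set `Y(c) = {y ∈ K* : A* y - c ∈ C*}`. -/
def Yfeas (A : E →ₗ[ℝ] E') (K : Set E') (C : Set E) (c : E) : Set E' :=
  {y | y ∈ dualCone K ∧ LinearMap.adjoint A y - c ∈ dualCone C}

/-- Primal optimal value `P* = sup {⟨c,x⟩ : x ∈ X(b)}`. -/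
noncomputable def Pval (A : E →ₗ[ℝ] E') (K : Set E') (C : Set E) (b : E') (c : E) : ℝ :=
  sSup ((fun x => ⟪c, x⟫) '' Xfeas A K C b)

/-- Dual optimal value `D* = inf {⟨b,y⟩ : y ∈ Y(c)}`. -/
noncomputable def Dval (A : E →ₗ[ℝ] E') (K : Set E') (C : Set E) (b : E') (c : E) : ℝ :=
  sInf ((fun y => ⟪b, y⟫) '' Yfeas A K C c)

/-- Recession cone of the primal feasible region: `{x ∈ C : A x ∈ -K}`. -/
def recXSet (A : E →ₗ[ℝ] E') (K : Set E') (C : Set E) : Set E :=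
  {x | x ∈ C ∧ A x ∈ -K}

/-- Recession cone of the dual feasible region: `{y ∈ K* : A* y ∈ C*}`. -/
def recYSet (A : E →ₗ[ℝ] E') (K : Set E') (C : Set E) : Set E' :=
  {y | y ∈ dualCone K ∧ LinearMap.adjoint A y ∈ dualCone C}

/-- `X(b)` is almost feasible. -/
def AlmostFeasX (A : E →ₗ[ℝ] E') (K : Set E') (C : Set E) (b : E') : Prop :=
  ∀ ε : ℝ, 0 < ε → ∃ bε : E', ‖bε‖ ≤ ε ∧ (Xfeas A K C (b + bε)).Nonempty

/-- `Y(c)` is almost feasible. -/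
def AlmostFeasY (A : E →ₗ[ℝ] E') (K : Set E') (C : Set E) (c : E) : Prop :=
  ∀ ε : ℝ, 0 < ε → ∃ cε : E, ‖cε‖ ≤ ε ∧ (Yfeas A K C (c + cε)).Nonempty


/-!
The set `W = {c | Y(c) ≠ ∅} = A*(K*) - C*` is a convex cone whose polar cone is the primal
recession cone `{0}`. By the separation theorem for closed cones, `W` is dense, and a dense convex
set in finite dimension is the whole space; so every `c` is dual feasible. For `y₁ ∈ relint K*`,
`s₁ ∈ relint C*` and `y₂ ∈ Y(s₁ - A* y₁)`, the point `y₂ + y₁` is the required `y`, because adding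
a point of a convex cone to a relative interior point of it stays in the relative interior.
-/

section Cones

variable {F : Type*} [NormedAddCommGroup F] [InnerProductSpace ℝ F]

lemma zero_mem_dualCone (S : Set F) : (0 : F) ∈ dualCone S := fun x _ => by
  rw [inner_zero_right]

lemma add_mem_dualCone {S : Set F} {a b : F} (ha : a ∈ dualCone S) (hb : b ∈ dualCone S) :
    a + b ∈ dualCone S := fun x hx => by
  rw [inner_add_right]; exact add_nonneg (ha x hx) (hb x hx)

lemma smul_mem_dualCone {S : Set F} {a : F} (ha : a ∈ dualCone S) {t : ℝ} (ht : 0 ≤ t) :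
    t • a ∈ dualCone S := fun x hx => by
  rw [real_inner_smul_right]; exact mul_nonneg ht (ha x hx)

lemma convex_dualCone (S : Set F) : Convex ℝ (dualCone S) :=
  fun _ ha _ hb _ _ hs ht _ => add_mem_dualCone (smul_mem_dualCone ha hs) (smul_mem_dualCone hb ht)

lemma IsClosedConvexCone.add_mem {Q : Set F} (hQ : IsClosedConvexCone Q) {a b : F}
    (ha : a ∈ Q) (hb : b ∈ Q) : a + b ∈ Q := by
  have hmid : (1/2 : ℝ) • a + (1/2 : ℝ) • b ∈ Q :=
    hQ.convex ha hb (by norm_num) (by norm_num) (by norm_num)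
  have := hQ.smul_mem hmid (t := 2) (by norm_num)
  rwa [show (2:ℝ) • ((1/2 : ℝ) • a + (1/2 : ℝ) • b) = a + b by module] at this

def IsClosedConvexCone.toProperCone {Q : Set F} (hQ : IsClosedConvexCone Q) : ProperCone ℝ F where
  carrier := Q
  add_mem' := hQ.add_mem
  zero_mem' := hQ.zero_mem
  smul_mem' c _ hx := hQ.smul_mem hx c.2
  isClosed' := hQ.closed

lemma IsClosedConvexCone.dualCone_dualCone [CompleteSpace F] {Q : Set F}
    (hQ : IsClosedConvexCone Q) : dualCone (dualCone Q) = Q :=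
  congrArg ((↑) : ProperCone ℝ F → Set F) (ProperCone.innerDual_innerDual hQ.toProperCone)

end Cones

lemma Convex.eq_univ_of_dense {F : Type*} [NormedAddCommGroup F] [NormedSpace ℝ F]
    [FiniteDimensional ℝ F] {s : Set F} (hs : Convex ℝ s) (hd : Dense s) : s = univ := by
  have hspan : affineSpan ℝ s = ⊤ := by
    refine eq_top_iff.mpr fun z _ => ?_
    exact closure_minimal (subset_affineSpan ℝ s) (affineSpan ℝ s).closed_of_finiteDimensional
      (hd.closure_eq ▸ mem_univ z)
  have hint := hs.interior_closure_eq_interior_of_nonempty_interior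
    (hs.interior_nonempty_iff_affineSpan_eq_top.mpr hspan)
  rw [hd.closure_eq, interior_univ] at hint
  exact eq_univ_of_univ_subset (hint ▸ interior_subset)

lemma PointedCone.eq_top_of_polarCone_eq_zero {F : Type*} [NormedAddCommGroup F]
    [InnerProductSpace ℝ F] [FiniteDimensional ℝ F] (W : PointedCone ℝ F)
    (hW : polarCone (W : Set F) = {0}) : W = ⊤ := by
  have hdense : Dense (W : Set F) := by
    refine fun z => by_contra fun hz => ?_
    obtain ⟨y, hy, hzy⟩ :=
      ProperCone.hyperplane_separation' (⟨W.closure, isClosed_closure⟩ : ProperCone ℝ F) hz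
    have hy0 : -y ∈ polarCone (W : Set F) := fun w hw => by
      simpa [inner_neg_right] using hy w (subset_closure hw)
    rw [hW, mem_singleton_iff, neg_eq_zero] at hy0
    simp [hy0] at hzy
  exact SetLike.coe_injective (W.convex.eq_univ_of_dense hdense)

lemma add_mem_intrinsicInterior {F : Type*} [NormedAddCommGroup F] [NormedSpace ℝ F]
    {s : Set F} {a b : F} (hb : ∀ x ∈ s, b + x ∈ s) (ha : a ∈ intrinsicInterior ℝ s) :
    b + a ∈ intrinsicInterior ℝ s := by
  obtain ⟨p, hp, rfl⟩ := mem_intrinsicInterior.mp ha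
  have : Nonempty (affineSpan ℝ s) := ⟨p⟩
  have hps : (p : F) ∈ s := interior_subset (s := ((↑) : affineSpan ℝ s → F) ⁻¹' s) hp
  have hdir : b ∈ (affineSpan ℝ s).direction := by
    simpa using AffineSubspace.vsub_mem_direction (subset_affineSpan ℝ s (hb _ hps))
      (subset_affineSpan ℝ s hps)
  let τ := (AffineIsometryEquiv.constVAdd ℝ (affineSpan ℝ s)
    (⟨b, hdir⟩ : (affineSpan ℝ s).direction)).toHomeomorph
  have hτ : τ '' ((↑) ⁻¹' s) ⊆ (↑) ⁻¹' s := by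
    rintro _ ⟨q, hq, rfl⟩
    exact hb _ hq
  refine mem_intrinsicInterior.mpr ⟨τ p, ?_, rfl⟩
  exact interior_mono hτ (τ.image_interior _ ▸ mem_image_of_mem τ hp)

lemma image_inter_neg_eq_zero_of_recXSet_eq_zero {F G : Type*} [NormedAddCommGroup F]
    [InnerProductSpace ℝ F] [NormedAddCommGroup G] [InnerProductSpace ℝ G] (f : F →ₗ[ℝ] G)
    {K : Set G} {C : Set F} (hK : (0 : G) ∈ K) (hC : (0 : F) ∈ C)
    (htriv : recXSet f K C = {0}) : (⇑f '' C) ∩ (-K) = {0} := by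
  ext z
  constructor
  · rintro ⟨⟨x, hxC, rfl⟩, hxK⟩
    have hx : x ∈ recXSet f K C := ⟨hxC, hxK⟩
    rw [htriv, mem_singleton_iff] at hx
    simp [hx]
  · rintro rfl
    exact ⟨⟨0, hC, map_zero f⟩, by simpa using hK⟩

section Duality

variable (A : E →ₗ[ℝ] E') {K : Set E'} {C : Set E}

lemma add_mem_Yfeas {c₁ c₂ : E} {y₁ y₂ : E'} (h₁ : y₁ ∈ Yfeas A K C c₁)
    (h₂ : y₂ ∈ Yfeas A K C c₂) : y₁ + y₂ ∈ Yfeas A K C (c₁ + c₂) := by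
  refine ⟨add_mem_dualCone h₁.1 h₂.1, ?_⟩
  rw [map_add, add_sub_add_comm]
  exact add_mem_dualCone h₁.2 h₂.2

lemma smul_mem_Yfeas {c : E} {y : E'} (h : y ∈ Yfeas A K C c) {t : ℝ} (ht : 0 ≤ t) :
    t • y ∈ Yfeas A K C (t • c) := by
  refine ⟨smul_mem_dualCone h.1 ht, ?_⟩
  rw [map_smul, ← smul_sub]
  exact smul_mem_dualCone h.2 ht

variable (K C) in
def dualFeasibleCone : PointedCone ℝ E where
  carrier := {c | (Yfeas A K C c).Nonempty}
  add_mem' := fun ⟨y₁, h₁⟩ ⟨y₂, h₂⟩ => ⟨_, add_mem_Yfeas A h₁ h₂⟩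
  zero_mem' := ⟨0, zero_mem_dualCone K, by simpa using zero_mem_dualCone C⟩
  smul_mem' t _ := fun ⟨y, h⟩ => ⟨_, smul_mem_Yfeas A h t.2⟩

lemma polarCone_dualFeasibleCone (hK : IsClosedConvexCone K) (hC : IsClosedConvexCone C) :
    polarCone (dualFeasibleCone A K C : Set E) = recXSet A K C := by
  ext x
  constructor
  · intro hx
    refine ⟨hC.dualCone_dualCone ▸ fun s hs => ?_, ?_⟩
    · have := hx (-s) ⟨0, zero_mem_dualCone K, by simpa using hs⟩
      rw [inner_neg_left] at this
      linarith [real_inner_comm x s]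
    · rw [mem_neg, ← hK.dualCone_dualCone]
      intro y hy
      have := hx (LinearMap.adjoint A y) ⟨y, hy, by simpa using zero_mem_dualCone C⟩
      rw [LinearMap.adjoint_inner_left] at this
      rw [inner_neg_right]
      linarith
  · rintro ⟨hxC, hxK⟩ c ⟨y, hyK, hyC⟩
    have h₁ : 0 ≤ ⟪x, LinearMap.adjoint A y - c⟫ := hyC x hxC
    have h₂ : 0 ≤ ⟪-A x, y⟫ := hyK _ hxK
    rw [inner_sub_right, real_inner_comm, LinearMap.adjoint_inner_left] at h₁
    rw [inner_neg_left, real_inner_comm] at h₂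
    rw [real_inner_comm]
    linarith

lemma Yfeas_nonempty_of_recXSet_eq_zero (hK : IsClosedConvexCone K)
    (hC : IsClosedConvexCone C) (htriv : recXSet A K C = {0}) (c : E) :
    (Yfeas A K C c).Nonempty := by
  have hW : dualFeasibleCone A K C = ⊤ :=
    PointedCone.eq_top_of_polarCone_eq_zero _ (by rw [polarCone_dualFeasibleCone A hK hC, htriv])
  exact (hW ▸ Submodule.mem_top : c ∈ dualFeasibleCone A K C)

end Duality

theorem stmt10 (A : E →ₗ[ℝ] E') (K : Set E') (C : Set E)
    (hK : IsClosedConvexCone K) (hC : IsClosedConvexCone C)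
    (htriv : recXSet A K C = {0}) :
    (⇑A '' C) ∩ (-K) = {0} ∧
    ∃ y ∈ intrinsicInterior ℝ (dualCone K),
      LinearMap.adjoint A y ∈ intrinsicInterior ℝ (dualCone C) := by
  refine ⟨image_inter_neg_eq_zero_of_recXSet_eq_zero A hK.zero_mem hC.zero_mem htriv, ?_⟩
  obtain ⟨y₁, hy₁⟩ := Set.Nonempty.intrinsicInterior (convex_dualCone K) ⟨0, zero_mem_dualCone K⟩
  obtain ⟨s₁, hs₁⟩ := Set.Nonempty.intrinsicInterior (convex_dualCone C) ⟨0, zero_mem_dualCone C⟩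
  obtain ⟨y₂, hy₂K, hy₂C⟩ : (Yfeas A K C (s₁ - LinearMap.adjoint A y₁)).Nonempty :=
    Yfeas_nonempty_of_recXSet_eq_zero A hK hC htriv _
  refine ⟨y₂ + y₁, add_mem_intrinsicInterior (fun _ => add_mem_dualCone hy₂K) hy₁, ?_⟩
  rw [show LinearMap.adjoint A (y₂ + y₁) =
    (LinearMap.adjoint A y₂ - (s₁ - LinearMap.adjoint A y₁)) + s₁ by rw [map_add]; abel]
  exact add_mem_intrinsicInterior (fun _ => add_mem_dualCone hy₂C) hs₁
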